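/- arXiv:2401.15552 — 3 statements merged into one kernel-verified Lean document; each statement's English description precedes it below -/
import Mathlib

section
/- If L1 ≤ U1 and L2 ≤ U2 and a real number w satisfies all four McCormick inequalities, namely w ≥ L1·y + x·L2 − L1·L2, w ≥ U1·y + x·U2 − U1·U2, w ≤ U1·y + x·L2 − U1·L2, w ≤ x·U2 + L1·y − L1·U2, for some x ∈ [L1,U1] and y ∈ [L2,U2], then |w − x·y| ≤ (U1 − L1)·(U2 − L2)/4. -/
lemma mccormick_aux (a b c d : ℝ) (ha : 0 ≤ a) (hb : 0 ≤ b) (hc : 0 ≤ c) (hd : 0 ≤ d)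
    (h : a * b ≤ c * d) : a * b ≤ (a + c) * (b + d) / 4 := by
  have k1 : a * b * (a * b) ≤ a * b * (c * d) :=
    mul_le_mul_of_nonneg_left h (mul_nonneg ha hb)
  have k2 : a * c ≤ ((a + c) / 2) ^ 2 := by nlinarith [sq_nonneg (a - c)]
  have k3 : b * d ≤ ((b + d) / 2) ^ 2 := by nlinarith [sq_nonneg (b - d)]
  have k4 : (a * c) * (b * d) ≤ ((a + c) / 2) ^ 2 * ((b + d) / 2) ^ 2 :=
    mul_le_mul k2 k3 (mul_nonneg hb hd) (sq_nonneg _)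
  nlinarith [mul_nonneg ha hb, mul_nonneg (add_nonneg ha hc) (add_nonneg hb hd)]

/-- Error bound for the McCormick relaxation of a bilinear term. -/
theorem mccormick_error_bound (x y w L1 U1 L2 U2 : ℝ)
    (hL1 : L1 ≤ U1) (hL2 : L2 ≤ U2)
    (hx1 : L1 ≤ x) (hx2 : x ≤ U1) (hy1 : L2 ≤ y) (hy2 : y ≤ U2)
    (h1 : w ≥ L1 * y + x * L2 - L1 * L2)
    (h2 : w ≥ U1 * y + x * U2 - U1 * U2)
    (h3 : w ≤ U1 * y + x * L2 - U1 * L2)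
    (h4 : w ≤ x * U2 + L1 * y - L1 * U2) :
    |w - x * y| ≤ (U1 - L1) * (U2 - L2) / 4 := by
  have ha : (0:ℝ) ≤ x - L1 := by linarith
  have hc : (0:ℝ) ≤ U1 - x := by linarith
  have hb : (0:ℝ) ≤ y - L2 := by linarith
  have hd : (0:ℝ) ≤ U2 - y := by linarith
  rw [abs_le]
  constructor
  · rcases le_total ((x - L1) * (y - L2)) ((U1 - x) * (U2 - y)) with h | h
    · have := mccormick_aux (x - L1) (y - L2) (U1 - x) (U2 - y) ha hb hc hd h
      nlinarith
    · have := mccormick_aux (U1 - x) (U2 - y) (x - L1) (y - L2) hc hd ha hb h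
      nlinarith
  · rcases le_total ((U1 - x) * (y - L2)) ((x - L1) * (U2 - y)) with h | h
    · have := mccormick_aux (U1 - x) (y - L2) (x - L1) (U2 - y) hc hb ha hd h
      nlinarith
    · have := mccormick_aux (x - L1) (U2 - y) (U1 - x) (y - L2) ha hd hc hb h
      nlinarith
end

section
/- (Proposition: joint vs individual martingale property under bicausality) Let (X_t, Y_t)_{t=1}^N be adapted integrable processes under a bicausal coupling π, i.e., for each t, Y_{1:t} is conditionally independent of X_{t+1:N} given X_{1:t}, and symmetrically X_{1:t} is conditionally independent of Y_{t+1:N} given Y_{1:t}. Then E[X_{t+1} | X_{1:t}, Y_{1:t}] = X_t and E[Y_{t+1} | X_{1:t}, Y_{1:t}] = Y_t for all t if and only if E[X_{t+1} | X_{1:t}] = X_t and E[Y_{t+1} | Y_{1:t}] = Y_t for all t. -/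
/-!
If `m₁` and `m₂` are conditionally independent given `m'`, then enlarging `m'` by `m₁` does not
change the conditional expectation of an `m₂`-measurable variable: `μ[f | m' ⊔ m₁] = μ[f | m']`.
Both sides are compared by a π-λ argument on the rectangles `u ∩ v` (`u ∈ m'`, `v ∈ m₁`). For
indicators of events this is the product formula defining conditional independence; for general
`f`, pulling the `m'`-measurable factor `μ⟦v | m'⟧` in and out of the conditional expectation
reduces it to the event case `μ⟦v | m' ⊔ m₂⟧ = μ⟦v | m'⟧`.
Causality at time `t` gives `μ[X_{t+1} | F^X_t ⊔ F^Y_t] = μ[X_{t+1} | F^X_t]` and anticausality the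
analogue for `Y`, so the joint and the individual martingale conditions are the same equations.
-/

open MeasureTheory ProbabilityTheory MeasurableSpace Set

theorem IsPiSystem.image2_inter {α : Type*} {C D : Set (Set α)} (hC : IsPiSystem C)
    (hD : IsPiSystem D) : IsPiSystem (image2 (· ∩ ·) C D) := by
  rintro _ ⟨s₁, hs₁, t₁, ht₁, rfl⟩ _ ⟨s₂, hs₂, t₂, ht₂, rfl⟩ hne
  rw [inter_inter_inter_comm] at hne ⊢
  exact mem_image2_of_mem (hC _ hs₁ _ hs₂ (hne.mono inter_subset_left))
    (hD _ ht₁ _ ht₂ (hne.mono inter_subset_right))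

theorem MeasurableSpace.sup_eq_generateFrom_image2_inter {α : Type*} (m₁ m₂ : MeasurableSpace α) :
    m₁ ⊔ m₂ =
      generateFrom (image2 (· ∩ ·) {s | MeasurableSet[m₁] s} {t | MeasurableSet[m₂] t}) := by
  refine le_antisymm (sup_le ?_ ?_) (generateFrom_le ?_)
  · exact fun s hs => measurableSet_generateFrom ⟨s, hs, univ, .univ, inter_univ s⟩
  · exact fun t ht => measurableSet_generateFrom ⟨univ, .univ, t, ht, univ_inter t⟩
  · rintro _ ⟨s, hs, t, ht, rfl⟩
    exact (le_sup_left (a := m₁) s hs).inter (le_sup_right (a := m₁) t ht)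

namespace MeasureTheory

variable {Ω E : Type*} [NormedAddCommGroup E] [NormedSpace ℝ E] [CompleteSpace E]
  {m m₁ m₂ mΩ : MeasurableSpace Ω} {μ : Measure Ω}

theorem ae_eq_condExp_of_forall_setIntegral_eq_of_isPiSystem [IsFiniteMeasure μ] (hm : m ≤ mΩ)
    {C : Set (Set Ω)} (hgen : m = generateFrom C) (hC : IsPiSystem C)
    {f g : Ω → E} (hf : Integrable f μ) (hg : Integrable g μ) (hgm : StronglyMeasurable[m] g)
    (h_univ : ∫ x, g x ∂μ = ∫ x, f x ∂μ)
    (h_eq : ∀ s ∈ C, ∫ x in s, g x ∂μ = ∫ x in s, f x ∂μ) : g =ᵐ[μ] μ[f | m] := by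
  refine ae_eq_condExp_of_forall_setIntegral_eq hm hf (fun s _ _ => hg.integrableOn)
    (fun s hs hμs => ?_) hgm.aestronglyMeasurable
  clear hμs
  induction s, hs using induction_on_inter hgen hC with
  | empty => simp
  | basic t ht => exact h_eq t ht
  | compl t ht iht =>
    rw [setIntegral_compl (hm t ht) hg, setIntegral_compl (hm t ht) hf, h_univ, iht]
  | iUnion s hdisj hs ihs =>
    rw [integral_iUnion (fun i => hm _ (hs i)) hdisj hg.integrableOn,
      integral_iUnion (fun i => hm _ (hs i)) hdisj hf.integrableOn]
    exact tsum_congr ihs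

theorem ae_eq_condExp_sup_of_forall_setIntegral_inter_eq [IsFiniteMeasure μ] (hm₁ : m₁ ≤ mΩ)
    (hm₂ : m₂ ≤ mΩ) {f g : Ω → E} (hf : Integrable f μ) (hg : Integrable g μ)
    (hgm : StronglyMeasurable[m₁ ⊔ m₂] g)
    (h_eq : ∀ s t, MeasurableSet[m₁] s → MeasurableSet[m₂] t →
      ∫ x in s ∩ t, g x ∂μ = ∫ x in s ∩ t, f x ∂μ) : g =ᵐ[μ] μ[f | m₁ ⊔ m₂] := by
  refine ae_eq_condExp_of_forall_setIntegral_eq_of_isPiSystem (sup_le hm₁ hm₂)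
    (sup_eq_generateFrom_image2_inter m₁ m₂) ((@isPiSystem_measurableSet _ m₁).image2_inter
      (@isPiSystem_measurableSet _ m₂)) hf hg hgm ?_ ?_
  · simpa using h_eq univ univ .univ .univ
  · rintro _ ⟨s, hs, t, ht, rfl⟩
    exact h_eq s t hs ht

theorem setIntegral_condExp_indicator_mul [IsFiniteMeasure μ] (hm : m ≤ mΩ) {s t : Set Ω}
    (hs : MeasurableSet[m] s) (ht : MeasurableSet t) {g : Ω → ℝ} (hgm : StronglyMeasurable[m] g)
    (hg : Integrable g μ) :
    ∫ x in s, (μ⟦t | m⟧ * g) x ∂μ = ∫ x in s ∩ t, g x ∂μ := by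
  have hmul : t.indicator (fun _ => (1 : ℝ)) * g = t.indicator g := by
    ext x; by_cases hx : x ∈ t <;> simp [hx]
  have hmul_int : Integrable (t.indicator (fun _ => (1 : ℝ)) * g) μ := hmul ▸ hg.indicator ht
  calc ∫ x in s, (μ⟦t | m⟧ * g) x ∂μ
      = ∫ x in s, (μ[t.indicator (fun _ => (1 : ℝ)) * g | m]) x ∂μ :=
        setIntegral_congr_ae (hm s hs) <| by
          filter_upwards [condExp_mul_of_stronglyMeasurable_right hgm hmul_int
            ((integrable_const 1).indicator ht)] with x hx _ using hx.symm
    _ = ∫ x in s, t.indicator g x ∂μ := by rw [setIntegral_condExp hm hmul_int hs, hmul]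
    _ = ∫ x in s ∩ t, g x ∂μ := setIntegral_indicator ht

end MeasureTheory

namespace ProbabilityTheory

variable {Ω : Type*} {m' m₁ m₂ mΩ : MeasurableSpace Ω} [StandardBorelSpace Ω] {μ : Measure Ω}
  [IsFiniteMeasure μ]

theorem CondIndep.condExp_indicator_sup_ae_eq (hm' : m' ≤ mΩ) (hm₁ : m₁ ≤ mΩ) (hm₂ : m₂ ≤ mΩ)
    (h : CondIndep m' m₁ m₂ hm' μ) {v : Set Ω} (hv : MeasurableSet[m₁] v) :
    μ⟦v | m' ⊔ m₂⟧ =ᵐ[μ] μ⟦v | m'⟧ := by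
  have hvΩ : MeasurableSet v := hm₁ v hv
  refine (ae_eq_condExp_sup_of_forall_setIntegral_inter_eq hm' hm₂
    ((integrable_const 1).indicator hvΩ) integrable_condExp
    (stronglyMeasurable_condExp.mono le_sup_left) fun u w hu hw => ?_).symm
  have hwΩ : MeasurableSet w := hm₂ w hw
  have hprod : μ⟦w ∩ v | m'⟧ =ᵐ[μ] μ⟦w | m'⟧ * μ⟦v | m'⟧ := by
    rw [inter_comm, mul_comm]
    exact (condIndep_iff m' m₁ m₂ hm' hm₁ hm₂ μ).mp h v w hv hw
  calc ∫ x in u ∩ w, (μ⟦v | m'⟧) x ∂μ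
      = ∫ x in u, (μ⟦w | m'⟧ * μ⟦v | m'⟧) x ∂μ :=
        (setIntegral_condExp_indicator_mul hm' hu hwΩ stronglyMeasurable_condExp
          integrable_condExp).symm
    _ = ∫ x in u, (μ⟦w ∩ v | m'⟧) x ∂μ := setIntegral_congr_ae (hm' u hu) <| by
        filter_upwards [hprod] with x hx _ using hx.symm
    _ = ∫ x in u, w.indicator (v.indicator fun _ => (1 : ℝ)) x ∂μ := by
        rw [setIntegral_condExp hm' ((integrable_const 1).indicator (hwΩ.inter hvΩ)) hu,
          indicator_indicator]
    _ = ∫ x in u ∩ w, v.indicator (fun _ => (1 : ℝ)) x ∂μ := setIntegral_indicator hwΩ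

theorem CondIndep.condExp_sup_ae_eq (hm' : m' ≤ mΩ) (hm₁ : m₁ ≤ mΩ) (hm₂ : m₂ ≤ mΩ)
    (h : CondIndep m' m₁ m₂ hm' μ) {f : Ω → ℝ} (hfm : StronglyMeasurable[m₂] f)
    (hf : Integrable f μ) : μ[f | m' ⊔ m₁] =ᵐ[μ] μ[f | m'] := by
  refine (ae_eq_condExp_sup_of_forall_setIntegral_inter_eq hm' hm₁ hf integrable_condExp
    (stronglyMeasurable_condExp.mono le_sup_left) fun u v hu hv => ?_).symm
  have hvΩ : MeasurableSet v := hm₁ v hv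
  have hbound : ∀ᵐ x ∂μ, ‖(μ⟦v | m'⟧) x‖ ≤ 1 := by
    refine ae_bdd_abs_condExp_of_ae_bdd_abs (Filter.Eventually.of_forall fun x => ?_)
    by_cases hx : x ∈ v <;> simp [hx]
  have hmul_int : Integrable (μ⟦v | m'⟧ * f) μ :=
    hf.bdd_mul integrable_condExp.aestronglyMeasurable hbound
  calc ∫ x in u ∩ v, μ[f | m'] x ∂μ
      = ∫ x in u, (μ⟦v | m'⟧ * μ[f | m']) x ∂μ :=
        (setIntegral_condExp_indicator_mul hm' hu hvΩ stronglyMeasurable_condExp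
          integrable_condExp).symm
    _ = ∫ x in u, μ[μ⟦v | m'⟧ * f | m'] x ∂μ := setIntegral_congr_ae (hm' u hu) <| by
        filter_upwards [condExp_stronglyMeasurable_mul_of_bound hm' stronglyMeasurable_condExp
          hf 1 hbound] with x hx _ using hx.symm
    _ = ∫ x in u, (μ⟦v | m'⟧ * f) x ∂μ := setIntegral_condExp hm' hmul_int hu
    _ = ∫ x in u, (μ⟦v | m' ⊔ m₂⟧ * f) x ∂μ := setIntegral_congr_ae (hm' u hu) <| by
        filter_upwards [h.condExp_indicator_sup_ae_eq hm' hm₁ hm₂ hv] with x hx _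
        simp only [Pi.mul_apply, hx]
    _ = ∫ x in u ∩ v, f x ∂μ :=
        setIntegral_condExp_indicator_mul (sup_le hm' hm₂) (le_sup_left (a := m') u hu) hvΩ
          (hfm.mono le_sup_right) hf

end ProbabilityTheory

theorem martingale_joint_iff_individual_of_bicausal_general
    {Ω : Type*} {mΩ : MeasurableSpace Ω} [StandardBorelSpace Ω]
    (μ : Measure Ω) [IsProbabilityMeasure μ]
    (N : ℕ) (X Y : ℕ → Ω → ℝ)
    (hXmeas : ∀ t, Measurable (X t)) (hYmeas : ∀ t, Measurable (Y t))
    (hXint : ∀ t, Integrable (X t) μ) (hYint : ∀ t, Integrable (Y t) μ)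
    (FX FY : ℕ → MeasurableSpace Ω)
    (hFXle : ∀ t, FX t ≤ mΩ) (hFYle : ∀ t, FY t ≤ mΩ)
    -- causality: σ(Y_{1:t}) ⫫ σ(X_{t+1}) given σ(X_{1:t})
    (hcausal : ∀ t, 1 ≤ t → t ≤ N - 1 →
      CondIndep (FX t) (FY t) (MeasurableSpace.comap (X (t+1)) inferInstance) (hFXle t) μ)
    -- anticausality: σ(X_{1:t}) ⫫ σ(Y_{t+1}) given σ(Y_{1:t})
    (hanticausal : ∀ t, 1 ≤ t → t ≤ N - 1 →
      CondIndep (FY t) (FX t) (MeasurableSpace.comap (Y (t+1)) inferInstance) (hFYle t) μ) :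
    (∀ t, 1 ≤ t → t ≤ N - 1 →
        μ[X (t+1) | FX t ⊔ FY t] =ᵐ[μ] X t ∧ μ[Y (t+1) | FX t ⊔ FY t] =ᵐ[μ] Y t) ↔
    (∀ t, 1 ≤ t → t ≤ N - 1 →
        μ[X (t+1) | FX t] =ᵐ[μ] X t ∧ μ[Y (t+1) | FY t] =ᵐ[μ] Y t) := by
  refine forall₂_congr fun t ht₁ => forall_congr' fun ht₂ => ?_
  have hX : μ[X (t+1) | FX t ⊔ FY t] =ᵐ[μ] μ[X (t+1) | FX t] :=
    (hcausal t ht₁ ht₂).condExp_sup_ae_eq (hFXle t) (hFYle t) (hXmeas (t+1)).comap_le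
      (comap_measurable (X (t+1))).stronglyMeasurable (hXint (t+1))
  have hY : μ[Y (t+1) | FX t ⊔ FY t] =ᵐ[μ] μ[Y (t+1) | FY t] := by
    rw [sup_comm]
    exact (hanticausal t ht₁ ht₂).condExp_sup_ae_eq (hFYle t) (hFXle t) (hYmeas (t+1)).comap_le
      (comap_measurable (Y (t+1))).stronglyMeasurable (hYint (t+1))
  exact and_congr ⟨hX.symm.trans, hX.trans⟩ ⟨hY.symm.trans, hY.trans⟩

/-- Under a bicausal coupling, the martingale property with respect to the joint
filtration is equivalent to the martingale property with respect to the individual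
filtrations. -/
theorem martingale_joint_iff_individual_of_bicausal
    {Ω : Type*} {mΩ : MeasurableSpace Ω} [StandardBorelSpace Ω]
    (μ : Measure Ω) [IsProbabilityMeasure μ]
    (N : ℕ) (X Y : ℕ → Ω → ℝ)
    (hXmeas : ∀ t, Measurable (X t)) (hYmeas : ∀ t, Measurable (Y t))
    (hXint : ∀ t, Integrable (X t) μ) (hYint : ∀ t, Integrable (Y t) μ)
    (FX FY : ℕ → MeasurableSpace Ω)
    (hFX : ∀ t, FX t = ⨆ i ∈ Finset.Icc 1 t, MeasurableSpace.comap (X i) inferInstance)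
    (hFY : ∀ t, FY t = ⨆ i ∈ Finset.Icc 1 t, MeasurableSpace.comap (Y i) inferInstance)
    (hFXle : ∀ t, FX t ≤ mΩ) (hFYle : ∀ t, FY t ≤ mΩ)
    -- causality: σ(Y_{1:t}) ⫫ σ(X_{t+1}) given σ(X_{1:t})
    (hcausal : ∀ t, 1 ≤ t → t ≤ N - 1 →
      CondIndep (FX t) (FY t) (MeasurableSpace.comap (X (t+1)) inferInstance) (hFXle t) μ)
    -- anticausality: σ(X_{1:t}) ⫫ σ(Y_{t+1}) given σ(Y_{1:t})
    (hanticausal : ∀ t, 1 ≤ t → t ≤ N - 1 →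
      CondIndep (FY t) (FX t) (MeasurableSpace.comap (Y (t+1)) inferInstance) (hFYle t) μ) :
    (∀ t, 1 ≤ t → t ≤ N - 1 →
        μ[X (t+1) | FX t ⊔ FY t] =ᵐ[μ] X t ∧ μ[Y (t+1) | FX t ⊔ FY t] =ᵐ[μ] Y t) ↔
    (∀ t, 1 ≤ t → t ≤ N - 1 →
        μ[X (t+1) | FX t] =ᵐ[μ] X t ∧ μ[Y (t+1) | FY t] =ᵐ[μ] Y t) :=
  martingale_joint_iff_individual_of_bicausal_general μ N X Y hXmeas hYmeas hXint hYint FX FY hFXle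
    hFYle hcausal hanticausal
end

section
/- (Proposition on VIX) Suppose VIX_t² = −(2/Δ)·E[ln(S_{t+Δ}/S_t) | S_t, VIX_t] with Δ > 0, and the causality condition holds: S_{t+Δ} is conditionally independent of VIX_t given S_t. Then VIX_t² = −(2/Δ)·E[ln(S_{t+Δ}/S_t) | S_t] almost surely, i.e., VIX_t is σ(S_t)-measurable up to null sets. -/
/-!
Causality makes `VIX_t` irrelevant for predicting the `σ(S_t, S_{t+Δ})`-measurable log-return once
`S_t` is known. For `A ∈ σ(S_t)` and `B ∈ σ(VIX_t)` one pulls `1_B` out of the integrals over `A`,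
replacing it by `P(B | S_t, S_{t+Δ})`, which conditional independence reduces to `P(B | S_t)`; so
`E[ln(S_{t+Δ}/S_t) | S_t]` has the right integrals over the π-system of sets `A ∩ B`, and hence
over all of `σ(S_t, VIX_t)`. Then `VIX_t²`, and with it `VIX_t = √(VIX_t²)`, is a.s.
`σ(S_t)`-measurable, and the Doob–Dynkin lemma factors it through `S_t`.
-/

open MeasureTheory ProbabilityTheory

section CondExpSup

variable {Ω : Type*} {m₁ m₂ m₃ mΩ : MeasurableSpace Ω} {μ : Measure Ω}

lemma MeasurableSpace.sup_eq_generateFrom_inter (m₁ m₂ : MeasurableSpace Ω) :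
    m₁ ⊔ m₂ = generateFrom
      {s | ∃ A C, MeasurableSet[m₁] A ∧ MeasurableSet[m₂] C ∧ s = A ∩ C} := by
  refine le_antisymm (sup_le ?_ ?_) (generateFrom_le ?_)
  · exact fun A hA => measurableSet_generateFrom ⟨A, .univ, hA, .univ, (Set.inter_univ A).symm⟩
  · exact fun C hC => measurableSet_generateFrom ⟨.univ, C, .univ, hC, (Set.univ_inter C).symm⟩
  · rintro _ ⟨A, C, hA, hC, rfl⟩
    exact (le_sup_left (b := m₂) A hA).inter (le_sup_right (a := m₁) C hC)

lemma isPiSystem_inter_measurableSet (m₁ m₂ : MeasurableSpace Ω) :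
    IsPiSystem {s | ∃ A C, MeasurableSet[m₁] A ∧ MeasurableSet[m₂] C ∧ s = A ∩ C} := by
  rintro _ ⟨A, C, hA, hC, rfl⟩ _ ⟨A', C', hA', hC', rfl⟩ _
  exact ⟨A ∩ A', C ∩ C', hA.inter hA', hC.inter hC', Set.inter_inter_inter_comm A C A' C'⟩

lemma setIntegral_sup_eq_of_forall_setIntegral_inter_eq
    (h₁ : m₁ ≤ mΩ) (h₂ : m₂ ≤ mΩ) {f g : Ω → ℝ} (hf : Integrable f μ) (hg : Integrable g μ)
    (h : ∀ A C, MeasurableSet[m₁] A → MeasurableSet[m₂] C →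
      ∫ ω in A ∩ C, f ω ∂μ = ∫ ω in A ∩ C, g ω ∂μ)
    {s : Set Ω} (hs : MeasurableSet[m₁ ⊔ m₂] s) :
    ∫ ω in s, f ω ∂μ = ∫ ω in s, g ω ∂μ := by
  have h₁₂ : m₁ ⊔ m₂ ≤ mΩ := sup_le h₁ h₂
  induction s, hs using MeasurableSpace.induction_on_inter
    (MeasurableSpace.sup_eq_generateFrom_inter m₁ m₂) (isPiSystem_inter_measurableSet m₁ m₂) with
  | empty => simp
  | basic _ hs =>
    obtain ⟨A, C, hA, hC, rfl⟩ := hs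
    exact h A C hA hC
  | compl t ht iht =>
    have huniv := h .univ .univ .univ .univ
    rw [Set.univ_inter, setIntegral_univ, setIntegral_univ] at huniv
    rw [← integral_add_compl (h₁₂ t ht) hf, ← integral_add_compl (h₁₂ t ht) hg, iht] at huniv
    linarith
  | iUnion u hdisj hu ihu =>
    rw [integral_iUnion (fun i => h₁₂ _ (hu i)) hdisj hf.integrableOn,
      integral_iUnion (fun i => h₁₂ _ (hu i)) hdisj hg.integrableOn]
    exact tsum_congr ihu

lemma condExp_sup_ae_eq_condExp_of_forall_setIntegral_inter_eq [IsFiniteMeasure μ]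
    (h₁ : m₁ ≤ mΩ) (h₂ : m₂ ≤ mΩ) {f : Ω → ℝ} (hf : Integrable f μ)
    (h : ∀ A C, MeasurableSet[m₁] A → MeasurableSet[m₂] C →
      ∫ ω in A ∩ C, (μ[f | m₁]) ω ∂μ = ∫ ω in A ∩ C, f ω ∂μ) :
    μ[f | m₁ ⊔ m₂] =ᵐ[μ] μ[f | m₁] :=
  (ae_eq_condExp_of_forall_setIntegral_eq (sup_le h₁ h₂) hf
    (fun _ _ _ => integrable_condExp.integrableOn)
    (fun _ hs _ =>
      setIntegral_sup_eq_of_forall_setIntegral_inter_eq h₁ h₂ integrable_condExp hf h hs)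
    (stronglyMeasurable_condExp.mono (le_sup_left : m₁ ≤ m₁ ⊔ m₂)).aestronglyMeasurable).symm

lemma setIntegral_mul_condExp (hm : m₁ ≤ mΩ) [SigmaFinite (μ.trim hm)] {f g : Ω → ℝ}
    {s : Set Ω} (hg : StronglyMeasurable[m₁] g) (hgf : Integrable (g * f) μ)
    (hf : Integrable f μ) (hs : MeasurableSet[m₁] s) :
    ∫ ω in s, (g * f) ω ∂μ = ∫ ω in s, (g * μ[f | m₁]) ω ∂μ := by
  rw [← setIntegral_condExp hm hgf hs]
  exact setIntegral_congr_ae (hm s hs)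
    ((condExp_mul_of_stronglyMeasurable_left hg hgf hf).mono fun _ h _ => h)

lemma setIntegral_inter_eq_setIntegral_mul_condExp_indicator [IsFiniteMeasure μ]
    (hm : m₁ ≤ mΩ) {g : Ω → ℝ} {s B : Set Ω} (hg : StronglyMeasurable[m₁] g)
    (hgi : Integrable g μ) (hs : MeasurableSet[m₁] s) (hB : MeasurableSet B) :
    ∫ ω in s ∩ B, g ω ∂μ = ∫ ω in s, (g * μ⟦B | m₁⟧) ω ∂μ := by
  have hgB : (g * B.indicator fun _ => (1 : ℝ)) = B.indicator g := by
    ext ω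
    by_cases hω : ω ∈ B <;> simp [hω]
  rw [← setIntegral_indicator hB, ← hgB, setIntegral_mul_condExp hm hg (hgB ▸ hgi.indicator hB)
    ((integrable_const 1).indicator hB) hs]

lemma MeasureTheory.Integrable.condExp_indicator_mul {f : Ω → ℝ} {B : Set Ω}
    (hf : Integrable f μ) : Integrable (μ⟦B | m₁⟧ * f) μ := by
  refine hf.bdd_mul (c := 1) integrable_condExp.aestronglyMeasurable ?_
  refine ae_bdd_abs_condExp_of_ae_bdd_abs (R := (1 : ℝ)) (.of_forall fun ω => ?_)
  by_cases hω : ω ∈ B <;> simp [hω]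

variable [StandardBorelSpace Ω] [IsFiniteMeasure μ]

lemma condExp_indicator_sup_ae_eq_of_condIndep (h₁ : m₁ ≤ mΩ) (h₂ : m₂ ≤ mΩ) (h₃ : m₃ ≤ mΩ)
    (hci : CondIndep m₁ m₂ m₃ h₁ μ) {C : Set Ω} (hC : MeasurableSet[m₂] C) :
    μ⟦C | m₁ ⊔ m₃⟧ =ᵐ[μ] μ⟦C | m₁⟧ := by
  refine condExp_sup_ae_eq_condExp_of_forall_setIntegral_inter_eq h₁ h₃
    ((integrable_const 1).indicator (h₂ C hC)) fun A B hA hB => ?_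
  have hA' := h₁ A hA
  have hB' := h₃ B hB
  calc ∫ ω in A ∩ B, (μ⟦C | m₁⟧) ω ∂μ
      = ∫ ω in A, (μ⟦C | m₁⟧ * μ⟦B | m₁⟧) ω ∂μ :=
        setIntegral_inter_eq_setIntegral_mul_condExp_indicator h₁ stronglyMeasurable_condExp
          integrable_condExp hA hB'
    _ = ∫ ω in A, (μ⟦C ∩ B | m₁⟧) ω ∂μ :=
        setIntegral_congr_ae hA' (((condIndep_iff m₁ m₂ m₃ h₁ h₂ h₃ μ).mp hci C B hC hB).mono
          fun _ h _ => h.symm)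
    _ = ∫ ω in A, (C ∩ B).indicator (fun _ => (1 : ℝ)) ω ∂μ :=
        setIntegral_condExp h₁ ((integrable_const 1).indicator ((h₂ C hC).inter hB')) hA
    _ = ∫ ω in A ∩ B, C.indicator (fun _ => (1 : ℝ)) ω ∂μ := by
        rw [← setIntegral_indicator hB', Set.indicator_indicator, Set.inter_comm]

lemma condExp_sup_ae_eq_of_condIndep (h₁ : m₁ ≤ mΩ) (h₂ : m₂ ≤ mΩ) (h₃ : m₃ ≤ mΩ)
    (hci : CondIndep m₁ m₂ m₃ h₁ μ) {f : Ω → ℝ} (hf : Integrable f μ)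
    (hfm : StronglyMeasurable[m₁ ⊔ m₂] f) :
    μ[f | m₁ ⊔ m₃] =ᵐ[μ] μ[f | m₁] := by
  refine condExp_sup_ae_eq_condExp_of_forall_setIntegral_inter_eq h₁ h₃ hf fun A B hA hB => ?_
  have hA' := h₁ A hA
  have hB' := h₃ B hB
  calc ∫ ω in A ∩ B, (μ[f | m₁]) ω ∂μ
      = ∫ ω in A, (μ[f | m₁] * μ⟦B | m₁⟧) ω ∂μ :=
        setIntegral_inter_eq_setIntegral_mul_condExp_indicator h₁ stronglyMeasurable_condExp
          integrable_condExp hA hB'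
    _ = ∫ ω in A, (μ⟦B | m₁⟧ * f) ω ∂μ := by
        rw [mul_comm, setIntegral_mul_condExp h₁ stronglyMeasurable_condExp
          hf.condExp_indicator_mul hf hA]
    _ = ∫ ω in A, (f * μ⟦B | m₁ ⊔ m₂⟧) ω ∂μ := by
        rw [mul_comm]
        refine setIntegral_congr_ae hA' ?_
        filter_upwards [condExp_indicator_sup_ae_eq_of_condIndep h₁ h₃ h₂ hci.symm hB]
          with ω h _
        simp only [Pi.mul_apply, h]
    _ = ∫ ω in A ∩ B, f ω ∂μ :=
        (setIntegral_inter_eq_setIntegral_mul_condExp_indicator (sup_le h₁ h₂) hfm hf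
          (le_sup_left (b := m₂) A hA) hB').symm

end CondExpSup

theorem vix_function_of_spot_under_causality_general
    {Ω : Type*} {mΩ : MeasurableSpace Ω} [StandardBorelSpace Ω]
    (μ : Measure Ω) [IsProbabilityMeasure μ]
    (Δ : ℝ)
    (St StΔ VIX : Ω → ℝ)
    (hStΔ : Measurable StΔ) (hVIX : Measurable VIX)
    (hVIXpos : ∀ ω, 0 < VIX ω)
    (hint : Integrable (fun ω => Real.log (StΔ ω / St ω)) μ)
    (hle : MeasurableSpace.comap St inferInstance ≤ mΩ)
    -- causality: S_{t+Δ} ⊥ VIX_t given S_t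
    (hci : CondIndep (MeasurableSpace.comap St inferInstance)
      (MeasurableSpace.comap StΔ inferInstance)
      (MeasurableSpace.comap VIX inferInstance) hle μ)
    -- structural link: VIX_t² = −(2/Δ)·E[ln(S_{t+Δ}/S_t) | S_t, VIX_t]
    (hstruct : (fun ω => (VIX ω) ^ 2) =ᵐ[μ]
      fun ω => -(2 / Δ) *
        condExp (MeasurableSpace.comap St inferInstance ⊔ MeasurableSpace.comap VIX inferInstance)
          μ (fun ω' => Real.log (StΔ ω' / St ω')) ω) :
    ((fun ω => (VIX ω) ^ 2) =ᵐ[μ]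
      fun ω => -(2 / Δ) *
        condExp (MeasurableSpace.comap St inferInstance) μ
          (fun ω' => Real.log (StΔ ω' / St ω')) ω) ∧
    ∃ G : ℝ → ℝ, Measurable G ∧ VIX =ᵐ[μ] fun ω => G (St ω) := by
  have hlog : StronglyMeasurable[MeasurableSpace.comap St inferInstance ⊔
      MeasurableSpace.comap StΔ inferInstance] fun ω => Real.log (StΔ ω / St ω) :=
    (Real.measurable_log.comp (((comap_measurable StΔ).mono le_sup_right le_rfl).div
      ((comap_measurable St).mono le_sup_left le_rfl))).stronglyMeasurable
  have hsq : (fun ω => (VIX ω) ^ 2) =ᵐ[μ] fun ω => -(2 / Δ) *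
      condExp (MeasurableSpace.comap St inferInstance) μ
        (fun ω' => Real.log (StΔ ω' / St ω')) ω := by
    filter_upwards [hstruct,
      condExp_sup_ae_eq_of_condIndep hle hStΔ.comap_le hVIX.comap_le hci hint hlog] with ω h h'
    rw [h, h']
  refine ⟨hsq, ?_⟩
  have hsqrt : Measurable[MeasurableSpace.comap St inferInstance] fun ω => √(-(2 / Δ) *
      condExp (MeasurableSpace.comap St inferInstance) μ
        (fun ω' => Real.log (StΔ ω' / St ω')) ω) :=
    Real.continuous_sqrt.measurable.comp
      (measurable_const.mul stronglyMeasurable_condExp.measurable)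
  obtain ⟨G, hG, hfac⟩ := hsqrt.exists_eq_measurable_comp
  refine ⟨G, hG, ?_⟩
  filter_upwards [hsq] with ω h
  rw [← Real.sqrt_sq (hVIXpos ω).le, h]
  exact congrFun hfac ω

/-- If the causality condition held for the S&P 500 / VIX pair, then the VIX would be a
function of the spot alone: `VIX_t² = −(2/Δ)·E[ln(S_{t+Δ}/S_t) | S_t]` a.s., and `VIX_t`
is σ(S_t)-measurable up to null sets. -/
theorem vix_function_of_spot_under_causality
    {Ω : Type*} {mΩ : MeasurableSpace Ω} [StandardBorelSpace Ω]
    (μ : Measure Ω) [IsProbabilityMeasure μ]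
    (Δ : ℝ) (hΔ : 0 < Δ)
    (St StΔ VIX : Ω → ℝ)
    (hSt : Measurable St) (hStΔ : Measurable StΔ) (hVIX : Measurable VIX)
    (hStpos : ∀ ω, 0 < St ω) (hStΔpos : ∀ ω, 0 < StΔ ω) (hVIXpos : ∀ ω, 0 < VIX ω)
    (hint : Integrable (fun ω => Real.log (StΔ ω / St ω)) μ)
    (hle : MeasurableSpace.comap St inferInstance ≤ mΩ)
    -- causality: S_{t+Δ} ⊥ VIX_t given S_t
    (hci : CondIndep (MeasurableSpace.comap St inferInstance)
      (MeasurableSpace.comap StΔ inferInstance)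
      (MeasurableSpace.comap VIX inferInstance) hle μ)
    -- structural link: VIX_t² = −(2/Δ)·E[ln(S_{t+Δ}/S_t) | S_t, VIX_t]
    (hstruct : (fun ω => (VIX ω) ^ 2) =ᵐ[μ]
      fun ω => -(2 / Δ) *
        condExp (MeasurableSpace.comap St inferInstance ⊔ MeasurableSpace.comap VIX inferInstance)
          μ (fun ω' => Real.log (StΔ ω' / St ω')) ω) :
    ((fun ω => (VIX ω) ^ 2) =ᵐ[μ]
      fun ω => -(2 / Δ) *
        condExp (MeasurableSpace.comap St inferInstance) μ
          (fun ω' => Real.log (StΔ ω' / St ω')) ω) ∧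
    ∃ G : ℝ → ℝ, Measurable G ∧ VIX =ᵐ[μ] fun ω => G (St ω) :=
  vix_function_of_spot_under_causality_general μ Δ St StΔ VIX hStΔ hVIX hVIXpos hint hle hci hstruct
end
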